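/- The relay rule Relay Reversal (applied twice) emulates the process rule Delegation: for every simple relay graph G_R and every application of Delegation to CPG(G_R) (process u with edges to distinct processes v and w replaces its edge to w by an edge from v to w) producing G_P', there is a simple relay graph G_R' with CPG(G_R') = G_P' obtainable from G_R using only Relay Reversal. -/

import Mathlib

/-- A relay graph: a finite type of relays, each owned by a process and having at
most one outgoing connection to another relay (`none` means the relay is a sink). -/
structure RG (P : Type) where
  R : Type
  fintR : Fintype R
  owner : R → P
  out : R → Option R

attribute [instance] RG.fintR

/-- The corresponding process (multi)graph `CPG(G)`: one edge `(owner r, owner s)`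
for every relay-to-relay connection `out r = some s`. -/
def cpg {P : Type} (G : RG P) : Multiset (P × P) :=
  (Finset.univ : Finset G.R).val.filterMap fun r =>
    (G.out r).map fun s => (G.owner r, G.owner s)

/-- A simple relay graph: all relays are direct (non-sink relays point to sinks)
and every sink relay has exactly one incoming connection. -/
def isSimple {P : Type} (G : RG P) : Prop :=
  (∀ r s : G.R, G.out r = some s → G.out s = none) ∧
  (∀ s : G.R, G.out s = none → ∃! r : G.R, G.out r = some s)

/-- `s` is the sink relay reached from `r` by following outgoing connections. -/
def isSinkOf {P : Type} (G : RG P) (r s : G.R) : Prop :=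
  Relation.ReflTransGen (fun a b => G.out a = some b) r s ∧ G.out s = none

/-- Isomorphism of relay graphs (over the same processes). -/
def rgIso {P : Type} (G G' : RG P) : Prop :=
  ∃ e : G.R ≃ G'.R, ∀ x : G.R,
    G'.owner (e x) = G.owner x ∧ G'.out (e x) = Option.map (fun y => e y) (G.out x)

/-- The relays removed when relay `r` (with sink relay `t`) is deleted by Relay
Reversal: `r` itself, together with `t` in case `r` was its only incoming
connection (the deliberate application then deletes the orphaned sink). -/
def revRemoved {P : Type} (G : RG P) (r t : G.R) : Set G.R :=
  {x | x = r ∨ (x = t ∧ ∀ y, y ≠ r → G.out y ≠ some t)}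

/-- Relay Introduction (net effect): a process `u` owning relays `r` and `s` sends
a reference of `s` via `r`; the sink process of `r` (owner of the sink relay `t`)
obtains a new relay `s'` with outgoing connection to `s`. All old relays are kept. -/
def relayIntro {P : Type} (G G' : RG P) : Prop :=
  ∃ (u : P) (r s t : G.R) (s' : G'.R) (F : G.R → G'.R),
    G.owner r = u ∧ G.owner s = u ∧ isSinkOf G r t ∧
    Function.Injective F ∧
    (∀ z : G'.R, z = s' ∨ ∃ x : G.R, F x = z) ∧
    (∀ x : G.R, F x ≠ s') ∧
    (∀ x : G.R, G'.owner (F x) = G.owner x ∧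
      G'.out (F x) = Option.map F (G.out x)) ∧
    G'.owner s' = G.owner t ∧ G'.out s' = some (F s)

/-- Relay Reversal (net effect): a process `u` owning relays `r ≠ s`, where `r` has
no incoming connection, sends a reference via `r` and subsequently deletes `r`.
Either an existing relay `s` of `u` is sent (first disjunct), or `u` creates a
fresh sink relay `q` and sends it (second disjunct); in both cases the sink
process of `r` obtains a new relay pointing to the sent relay, and `r` (together
with its sink relay if thereby orphaned) is deleted. -/
def relayReversal {P : Type} (G G' : RG P) : Prop :=
  ∃ (u : P) (r t : G.R), G.owner r = u ∧ (∀ x : G.R, G.out x ≠ some r) ∧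
    isSinkOf G r t ∧
    ((∃ (s : G.R) (s' : G'.R) (F : G.R → G'.R),
        s ≠ r ∧ G.owner s = u ∧ s ∉ revRemoved G r t ∧
        (∀ x y : G.R, x ∉ revRemoved G r t → y ∉ revRemoved G r t →
          (F x = F y ↔ x = y)) ∧
        (∀ z : G'.R, z = s' ∨ ∃ x : G.R, x ∉ revRemoved G r t ∧ F x = z) ∧
        (∀ x : G.R, x ∉ revRemoved G r t → F x ≠ s') ∧
        (∀ x : G.R, x ∉ revRemoved G r t → G'.owner (F x) = G.owner x ∧
          G'.out (F x) = Option.map F (G.out x)) ∧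
        G'.owner s' = G.owner t ∧ G'.out s' = some (F s)) ∨
     (∃ (q q' : G'.R) (F : G.R → G'.R),
        q ≠ q' ∧
        (∀ x y : G.R, x ∉ revRemoved G r t → y ∉ revRemoved G r t →
          (F x = F y ↔ x = y)) ∧
        (∀ z : G'.R, z = q ∨ z = q' ∨ ∃ x : G.R, x ∉ revRemoved G r t ∧ F x = z) ∧
        (∀ x : G.R, x ∉ revRemoved G r t → F x ≠ q ∧ F x ≠ q') ∧
        (∀ x : G.R, x ∉ revRemoved G r t → G'.owner (F x) = G.owner x ∧
          G'.out (F x) = Option.map F (G.out x)) ∧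
        G'.owner q = u ∧ G'.out q = none ∧
        G'.owner q' = G.owner t ∧ G'.out q' = some q))

/-- Relay Fusion (net effect): two relays `r ≠ r'` of the same process with the
same outgoing target are merged into one. -/
def relayFusion {P : Type} (G G' : RG P) : Prop :=
  ∃ (r r' : G.R) (_ : r ≠ r') (f : G.R → G'.R),
    G.owner r = G.owner r' ∧ G.out r = G.out r' ∧
    Function.Surjective f ∧
    (∀ x y : G.R, f x = f y ↔ (x = y ∨ ({x, y} : Set G.R) = {r, r'})) ∧
    ∀ x : G.R, G'.owner (f x) = G.owner x ∧ G'.out (f x) = Option.map f (G.out x)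

/-- Edges of the relay graph seen as a directed graph on processes and relays:
ownership edges, relay-to-relay edges, and sink-relay-to-process edges. -/
def rgEdge {P : Type} (G : RG P) : (P ⊕ G.R) → (P ⊕ G.R) → Prop := fun a b =>
  (∃ r : G.R, a = Sum.inl (G.owner r) ∧ b = Sum.inr r) ∨
  (∃ r s : G.R, a = Sum.inr r ∧ b = Sum.inr s ∧ G.out r = some s) ∨
  (∃ r : G.R, a = Sum.inr r ∧ G.out r = none ∧ b = Sum.inl (G.owner r))

/-- Weak connectivity of a relay graph. -/
def rgWC {P : Type} (G : RG P) : Prop :=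
  ∀ a b : P ⊕ G.R,
    Relation.ReflTransGen (fun x y => rgEdge G x y ∨ rgEdge G y x) a b

/-!
Write the edge `(u, v)` as a relay `rv` of `u` connected to the sink `tv` of `v`, and `(u, w)` as
a relay `rw` of `u` connected to the sink `tw` of `w`. First `u` sends `rv` through `rw` and
deletes `rw`; the orphaned sink `tw` goes with it and `w` receives a relay pointing at `rv`. Then
`w` sends a fresh sink of its own through that relay and deletes it; the sink process of that
relay is `v`, which receives a relay pointing at the fresh sink. Up to relabelling of relays, the
result is `G` without `rw, tw` plus one direct connection from `v` to `w`: it is simple and its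
process graph is `CPG(G)` with `(u, w)` replaced by `(v, w)`.
-/

namespace RG

variable {P : Type}

open Classical in
noncomputable def restrictMap (G : RG P) (S : Set G.R) (x : G.R) : Option S :=
  if h : x ∈ S then some ⟨x, h⟩ else none

/-- Connections leaving `S` are dropped. -/
@[reducible] noncomputable def restrict (G : RG P) (S : Set G.R) : RG P where
  R := S
  fintR := Fintype.ofFinite S
  owner x := G.owner x
  out x := (G.out x).bind (G.restrictMap S)

def OutClosed (G : RG P) (S : Set G.R) : Prop :=
  ∀ x ∈ S, ∀ y, G.out x = some y → y ∈ S

@[reducible] def addRelay (G : RG P) (p : P) (o : Option G.R) : RG P where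
  R := Option G.R
  fintR := inferInstance
  owner x := x.elim p G.owner
  out x := x.elim (o.map some) fun a => (G.out a).map some

/-- The new relay of `p` is `none`; the new sink relay of `q` is `some none`. -/
@[reducible] def addLink (G : RG P) (p q : P) : RG P :=
  (G.addRelay q none).addRelay p (some none)

def edgesFrom (G : RG P) (r : G.R) : Multiset (P × P) :=
  match G.out r with
  | none => 0
  | some s => {(G.owner r, G.owner s)}

variable {G : RG P}

theorem addRelay_out_ne_some_none (p : P) (o : Option G.R) (x : Option G.R) :
    (G.addRelay p o).out x ≠ some none := by
  rcases x with _ | a <;> simp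

theorem restrictMap_of_mem {S : Set G.R} {x : G.R} (hx : x ∈ S) :
    G.restrictMap S x = some ⟨x, hx⟩ :=
  dif_pos hx

theorem restrictMap_inj {S : Set G.R} {x y : G.R} (hx : x ∈ S) (hy : y ∈ S) :
    G.restrictMap S x = G.restrictMap S y ↔ x = y := by
  simp [restrictMap_of_mem hx, restrictMap_of_mem hy]

theorem restrict_out_eq_iff {S : Set G.R} (hS : G.OutClosed S) (x : S) (o : Option S) :
    (G.restrict S).out x = o ↔ G.out x = o.map Subtype.val := by
  change (G.out x).bind (G.restrictMap S) = o ↔ _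
  rcases h : G.out x with _ | y
  · cases o <;> simp
  · rw [Option.bind_some, restrictMap_of_mem (hS x x.2 y h)]
    cases o <;> simp [Subtype.ext_iff, eq_comm]

theorem map_restrictMap_out {S : Set G.R} (hS : G.OutClosed S) {x : G.R} (hx : x ∈ S) :
    (G.out x).map (G.restrictMap S) = ((G.restrict S).out ⟨x, hx⟩).map some := by
  rcases h : G.out x with _ | y
  · rw [(restrict_out_eq_iff hS ⟨x, hx⟩ none).2 h]; rfl
  · have hy := hS x hx y h
    rw [(restrict_out_eq_iff hS ⟨x, hx⟩ (some ⟨y, hy⟩)).2 h, Option.map_some,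
      restrictMap_of_mem hy]
    rfl

variable (G) in
theorem cpg_eq_sum : cpg G = ∑ r, G.edgesFrom r := by
  rw [cpg, Multiset.filterMap_eq_bind, Finset.sum_eq_multiset_sum, Multiset.bind,
    Multiset.join]
  congr 1
  refine Multiset.map_congr rfl fun r _ => ?_
  unfold edgesFrom
  cases G.out r <;> rfl

theorem mem_cpg {a b : P} :
    (a, b) ∈ cpg G ↔ ∃ r s, G.out r = some s ∧ G.owner r = a ∧ G.owner s = b := by
  simp [cpg, Multiset.mem_filterMap, Option.map_eq_some_iff]

theorem edgesFrom_eq_zero {r : G.R} (h : G.out r = none) : G.edgesFrom r = 0 := by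
  rw [edgesFrom, h]

theorem edgesFrom_eq_singleton {r s : G.R} (h : G.out r = some s) :
    G.edgesFrom r = {(G.owner r, G.owner s)} := by
  rw [edgesFrom, h]

theorem edgesFrom_addRelay_some (p : P) (o : Option G.R) (a : G.R) :
    (G.addRelay p o).edgesFrom (some a) = G.edgesFrom a := by
  rcases h : G.out a with _ | s
  · rw [edgesFrom_eq_zero h, edgesFrom_eq_zero (by simp [h])]
  · rw [edgesFrom_eq_singleton h, edgesFrom_eq_singleton (s := some s) (by simp [h])]
    rfl

theorem cpg_addRelay (p : P) (o : Option G.R) :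
    cpg (G.addRelay p o) = (G.addRelay p o).edgesFrom none + cpg G := by
  rw [cpg_eq_sum, cpg_eq_sum]
  change ∑ r : Option G.R, (G.addRelay p o).edgesFrom r = _
  simp only [Fintype.sum_option, edgesFrom_addRelay_some]

theorem cpg_addRelay_none (p : P) : cpg (G.addRelay p none) = cpg G := by
  rw [cpg_addRelay, edgesFrom_eq_zero (G := G.addRelay p none) (r := none) rfl, zero_add]

theorem cpg_addRelay_some (p : P) (s : G.R) :
    cpg (G.addRelay p (some s)) = (p, G.owner s) ::ₘ cpg G := by
  rw [cpg_addRelay,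
    edgesFrom_eq_singleton (G := G.addRelay p (some s)) (r := none) (s := some s) rfl]
  rfl

theorem cpg_addLink (p q : P) : cpg (G.addLink p q) = (p, q) ::ₘ cpg G :=
  (cpg_addRelay_some (G := G.addRelay q none) p none).trans
    (congrArg _ (cpg_addRelay_none q))

theorem cpg_eq_cpg_restrict_add {S : Set G.R} (hS : G.OutClosed S) {s : Finset G.R}
    (hs : ∀ x, x ∈ s ↔ x ∉ S) :
    cpg G = cpg (G.restrict S) + ∑ x ∈ s, G.edgesFrom x := by
  classical
  have hedges (x : S) : (G.restrict S).edgesFrom x = G.edgesFrom x := by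
    unfold edgesFrom
    rcases h : G.out x with _ | y
    · rw [(restrict_out_eq_iff hS x none).2 h]
    · rw [(restrict_out_eq_iff hS x (some ⟨y, hS x x.2 y h⟩)).2 h]
  rw [cpg_eq_sum G, cpg_eq_sum (G.restrict S),
    ← Finset.sum_filter_add_sum_filter_not _ (· ∈ S),
    Finset.sum_subtype (F := (G.restrict S).fintR) _ (fun x => by simp)]
  congr 1
  · exact Finset.sum_congr rfl fun x _ => (hedges x).symm
  · exact Finset.sum_congr (by ext x; simp [hs]) fun _ _ => rfl

theorem cpg_eq_of_rgIso {G' : RG P} (h : rgIso G G') : cpg G = cpg G' := by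
  obtain ⟨e, he⟩ := h
  rw [cpg_eq_sum G, cpg_eq_sum G']
  refine Fintype.sum_equiv e _ _ fun x => ?_
  unfold edgesFrom
  rw [(he x).2, (he x).1]
  cases G.out x <;> simp [he]

theorem isSimple_of_rgIso {G' : RG P} (hG : isSimple G) (h : rgIso G G') : isSimple G' := by
  obtain ⟨e, he⟩ := h
  have hout (x : G.R) (o : Option G.R) : G'.out (e x) = o.map e ↔ G.out x = o := by
    rw [(he x).2]
    exact (Option.map_injective e.injective).eq_iff
  constructor
  · intro r s hrs
    obtain ⟨a, rfl⟩ := e.surjective r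
    obtain ⟨b, rfl⟩ := e.surjective s
    exact (hout b none).2 (hG.1 a b ((hout a (some b)).1 hrs))
  · intro s hs
    obtain ⟨b, rfl⟩ := e.surjective s
    obtain ⟨a, ha, huniq⟩ := hG.2 b ((hout b none).1 hs)
    refine ⟨e a, (hout a (some b)).2 ha, fun y hy => ?_⟩
    obtain ⟨c, rfl⟩ := e.surjective y
    rw [huniq c ((hout c (some b)).1 hy)]

theorem isSimple_restrict {S : Set G.R} (hG : isSimple G) (hS : G.OutClosed S)
    (hin : ∀ x y, G.out x = some y → y ∈ S → x ∈ S) : isSimple (G.restrict S) := by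
  constructor
  · intro x y hxy
    exact (restrict_out_eq_iff hS y none).2 (hG.1 x y ((restrict_out_eq_iff hS x (some y)).1 hxy))
  · intro s hs
    obtain ⟨r, hr, huniq⟩ := hG.2 s ((restrict_out_eq_iff hS s none).1 hs)
    exact ⟨⟨r, hin r s hr s.2⟩, (restrict_out_eq_iff hS _ (some s)).2 hr,
      fun y hy => Subtype.ext (huniq y ((restrict_out_eq_iff hS y (some s)).1 hy))⟩

theorem isSimple_addLink (hG : isSimple G) (p q : P) : isSimple (G.addLink p q) := by
  have hout (a : G.R) : (G.addLink p q).out (some (some a)) = (G.out a).map (some ∘ some) :=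
    Option.map_map _ _ _
  have hinj : Function.Injective (Option.map (some ∘ some : G.R → Option (Option G.R))) :=
    Option.map_injective ((Option.some_injective _).comp (Option.some_injective _))
  constructor
  · rintro (_ | _ | a) s h
    · cases h
      rfl
    · cases h
    · rw [hout] at h
      obtain ⟨b, hb, rfl⟩ := Option.map_eq_some_iff.1 h
      rw [Function.comp_apply, hout, hG.1 a b hb, Option.map_none]
  · rintro (_ | _ | a) h
    · cases h
    · refine ⟨none, rfl, ?_⟩
      rintro (_ | _ | b) hb
      · rfl
      · cases hb
      · rw [hout] at hb
        obtain ⟨c, -, hc⟩ := Option.map_eq_some_iff.1 hb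
        cases hc
    · obtain ⟨r, hr, huniq⟩ := hG.2 a (Option.map_eq_none_iff.1 ((hout a).symm.trans h))
      refine ⟨some (some r), (hout r).trans (by rw [hr]; rfl), ?_⟩
      rintro (_ | _ | b) hb
      · cases hb
      · cases hb
      · rw [huniq b (hinj ((hout b).symm.trans hb))]

theorem rgIso_restrict_addRelay (p : P) (o : Option G.R) :
    rgIso G ((G.addRelay p o).restrict {none}ᶜ) := by
  have hS : (G.addRelay p o).OutClosed {none}ᶜ := by
    rintro (_ | a) ha y hy
    · exact absurd rfl ha
    · obtain ⟨b, -, rfl⟩ := Option.map_eq_some_iff.1 hy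
      exact Option.some_ne_none b
  refine ⟨⟨fun a => ⟨some a, Option.some_ne_none a⟩,
    fun x => x.1.get (Option.ne_none_iff_isSome.1 x.2), fun a => rfl,
    fun x => Subtype.ext (Option.some_get _)⟩, fun a => ⟨rfl, ?_⟩⟩
  rw [restrict_out_eq_iff hS, Option.map_map]
  rfl

section Reversal

variable {r t : G.R}

theorem isSinkOf_of_out_eq_some (hrt : G.out r = some t) (ht : G.out t = none) :
    isSinkOf G r t :=
  ⟨.single hrt, ht⟩

theorem outClosed_compl_revRemoved (hr : ∀ x, G.out x ≠ some r) :
    G.OutClosed (revRemoved G r t)ᶜ := by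
  rintro x hx y hxy (rfl | ⟨rfl, hno⟩)
  · exact hr x hxy
  · exact hno x (fun h => hx (Or.inl h)) hxy

theorem revRemoved_eq_singleton {y : G.R} (hy : y ≠ r) (hyt : G.out y = some t) :
    revRemoved G r t = {r} := by
  ext x
  exact or_iff_left fun h => h.2 y hy hyt

theorem relayReversal_send (hr : ∀ x, G.out x ≠ some r) (hrt : isSinkOf G r t) {s : G.R}
    (hs : s ∉ revRemoved G r t) (hsr : G.owner s = G.owner r) :
    relayReversal G
      ((G.restrict (revRemoved G r t)ᶜ).addRelay (G.owner t) (some ⟨s, hs⟩)) := by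
  have hS := outClosed_compl_revRemoved (t := t) hr
  have hF (x) (hx : x ∉ revRemoved G r t) := restrictMap_of_mem (G := G) (S := _ᶜ) hx
  refine ⟨G.owner r, r, t, rfl, hr, hrt, Or.inl ⟨s, none, G.restrictMap _,
    fun h => hs (Or.inl h), hsr, hs, fun x y hx hy => restrictMap_inj hx hy, ?_,
    fun x hx => by simp [hF x hx], fun x hx => ?_, rfl, ?_⟩⟩
  · rintro (_ | a)
    · exact Or.inl rfl
    · exact Or.inr ⟨a, a.2, hF a a.2⟩
  · rw [hF x hx, map_restrictMap_out hS hx]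
    exact ⟨rfl, rfl⟩
  · rw [hF s hs]
    rfl

theorem relayReversal_fresh (hr : ∀ x, G.out x ≠ some r) (hrt : isSinkOf G r t) :
    relayReversal G ((G.restrict (revRemoved G r t)ᶜ).addLink (G.owner t) (G.owner r)) := by
  have hS := outClosed_compl_revRemoved (t := t) hr
  have hF (x) (hx : x ∉ revRemoved G r t) := restrictMap_of_mem (G := G) (S := _ᶜ) hx
  refine ⟨G.owner r, r, t, rfl, hr, hrt, Or.inr ⟨some none, none,
    fun x => some (G.restrictMap _ x), by simp, fun x y hx hy => ?_, ?_,
    fun x hx => by simp [hF x hx], fun x hx => ?_, rfl, rfl, rfl, rfl⟩⟩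
  · exact Option.some_inj.trans (restrictMap_inj hx hy)
  · rintro (_ | _ | a)
    · exact Or.inr (Or.inl rfl)
    · exact Or.inl rfl
    · exact Or.inr (Or.inr ⟨a, a.2, congrArg some (hF a a.2)⟩)
  · beta_reduce
    rw [hF x hx]
    exact ⟨rfl, (congrArg (Option.map some) (map_restrictMap_out hS hx)).symm.trans
      (Option.map_map _ _ _)⟩

theorem exists_relayReversal_addRelay_addLink (hrt : G.out r = some t) (ht : G.out t = none)
    (p : P) : ∃ K : RG P, relayReversal (G.addRelay p (some r)) (K.addLink (G.owner t) p) ∧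
      rgIso G K := by
  have hrt' : (G.addRelay p (some r)).out (some r) = some (some t) := by simp [hrt]
  refine ⟨_, relayReversal_fresh (addRelay_out_ne_some_none _ _)
    ⟨.head rfl (.single hrt'), by simp [ht]⟩, ?_⟩
  rw [revRemoved_eq_singleton (Option.some_ne_none _) hrt']
  exact rgIso_restrict_addRelay _ _

theorem out_ne_some_of_isSimple (hG : isSimple G) (hrt : G.out r = some t) (x : G.R) :
    G.out x ≠ some r := fun h => by
  simp [hG.1 x r h] at hrt

theorem eq_of_out_eq_some_of_isSimple (hG : isSimple G) (hrt : G.out r = some t) {x : G.R}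
    (hx : G.out x = some t) : x = r :=
  (hG.2 t (hG.1 r t hrt)).unique hx hrt

theorem mem_revRemoved_of_isSimple (hG : isSimple G) (hrt : G.out r = some t) {x : G.R} :
    x ∈ revRemoved G r t ↔ x = r ∨ x = t :=
  or_congr_right ⟨And.left, fun h =>
    ⟨h, fun _ hy hyt => hy (eq_of_out_eq_some_of_isSimple hG hrt hyt)⟩⟩

theorem notMem_revRemoved_of_out_eq_some (hG : isSimple G) (hrt : G.out r = some t)
    {x y : G.R} (hxy : G.out x = some y) (hyt : y ≠ t) :
    x ∉ revRemoved G r t ∧ y ∉ revRemoved G r t := by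
  simp only [mem_revRemoved_of_isSimple hG hrt, not_or]
  refine ⟨⟨?_, ?_⟩, ?_, hyt⟩
  · rintro rfl
    exact hyt (Option.some_inj.1 (hxy.symm.trans hrt))
  · rintro rfl
    simp [hG.1 r x hrt] at hxy
  · rintro rfl
    exact out_ne_some_of_isSimple hG hrt x hxy

theorem isSimple_restrict_compl_revRemoved (hG : isSimple G) (hrt : G.out r = some t) :
    isSimple (G.restrict (revRemoved G r t)ᶜ) :=
  isSimple_restrict hG (outClosed_compl_revRemoved (out_ne_some_of_isSimple hG hrt))
    fun _ _ hxy hy => (notMem_revRemoved_of_out_eq_some hG hrt hxy fun h =>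
      hy ((mem_revRemoved_of_isSimple hG hrt).2 (Or.inr h))).1

theorem cpg_eq_cons_cpg_restrict (hG : isSimple G) (hrt : G.out r = some t) :
    cpg G = (G.owner r, G.owner t) ::ₘ cpg (G.restrict (revRemoved G r t)ᶜ) := by
  classical
  have ht := hG.1 r t hrt
  have hrt_ne : r ≠ t := by
    rintro rfl
    simp [ht] at hrt
  rw [cpg_eq_cpg_restrict_add (s := {r, t})
      (outClosed_compl_revRemoved (t := t) (out_ne_some_of_isSimple hG hrt))
      (by simp [mem_revRemoved_of_isSimple hG hrt, or_iff_not_imp_left]),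
    Finset.sum_pair hrt_ne, edgesFrom_eq_singleton hrt, edgesFrom_eq_zero ht,
    add_zero, add_comm, Multiset.singleton_add]

end Reversal

end RG

open RG

/-- Relay Reversal applied twice emulates the process rule
Delegation: for every simple relay graph `G` and every application of Delegation
to `CPG(G)` (pairwise distinct processes `u, v, w` with edges `(u,v)` and `(u,w)`;
the edge `(u,w)` is replaced by an edge `(v,w)`), a simple relay graph whose `CPG`
is the result is obtained from `G` by two applications of Relay Reversal. -/
theorem relayReversal_emulates_Delegation {P : Type} [DecidableEq P] (G : RG P)
    (hG : isSimple G) (E' : Multiset (P × P))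
    (hstep : ∃ u v w : P, u ≠ v ∧ u ≠ w ∧ v ≠ w ∧
      (u, v) ∈ cpg G ∧ (u, w) ∈ cpg G ∧
      E' = (v, w) ::ₘ (cpg G).erase (u, w)) :
    ∃ G1 G2 : RG P, relayReversal G G1 ∧ relayReversal G1 G2 ∧
      isSimple G2 ∧ cpg G2 = E' := by
  obtain ⟨u, v, w, -, -, hvw, huv, huw, rfl⟩ := hstep
  obtain ⟨rv, tv, hrv, rfl, rfl⟩ := mem_cpg.1 huv
  obtain ⟨rw, tw, hrw, hu, rfl⟩ := mem_cpg.1 huw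
  obtain ⟨hrv_surv, htv_surv⟩ :=
    notMem_revRemoved_of_out_eq_some hG hrw hrv fun h => hvw (congrArg G.owner h)
  have hS := outClosed_compl_revRemoved (t := tw) (out_ne_some_of_isSimple hG hrw)
  obtain ⟨K, hK, hiso⟩ := exists_relayReversal_addRelay_addLink (p := G.owner tw)
    ((restrict_out_eq_iff hS ⟨rv, hrv_surv⟩ (some ⟨tv, htv_surv⟩)).2 hrv)
    ((restrict_out_eq_iff hS ⟨tv, htv_surv⟩ none).2 (hG.1 _ _ hrv))
  refine ⟨_, _, relayReversal_send (out_ne_some_of_isSimple hG hrw)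
      (isSinkOf_of_out_eq_some hrw (hG.1 _ _ hrw)) hrv_surv hu.symm, hK, ?_, ?_⟩
  · exact isSimple_addLink (isSimple_of_rgIso (isSimple_restrict_compl_revRemoved hG hrw) hiso) _ _
  · rw [cpg_addLink, ← cpg_eq_of_rgIso hiso, cpg_eq_cons_cpg_restrict hG hrw, hu,
      Multiset.erase_cons_head]
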